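/- arXiv:2106.07604 — 6 statements merged into one kernel-verified Lean document; each statement's English description precedes it below -/
import Mathlib

section
/- Let κ : ℝ → ℝ be continuous with -K ≤ κ(t) ≤ -k for all t ≥ 0, 0 < k ≤ K. Let a, b solve y'' + κ y = 0 with a(0)=1, a'(0)=0 and b(0)=0, b'(0)=1. Then for all t > 0, a'(t)²/(b'(t)² - 1) ≥ (k/K) · (a(t)² - 1)/b(t)², where all quantities appearing in denominators are positive for t > 0. -/
open Set Filter Topology

private lemma mono_aux {f f' : ℝ → ℝ} (hf : ∀ t, HasDerivAt f (f' t) t)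
    {s t : ℝ} (hst : s ≤ t) (h : ∀ u ∈ Set.Icc s t, 0 ≤ f' u) : f s ≤ f t := by
  have hm : MonotoneOn f (Set.Icc s t) := by
    apply monotoneOn_of_deriv_nonneg (convex_Icc s t)
      (fun x _ => (hf x).continuousAt.continuousWithinAt)
      (fun x _ => (hf x).differentiableAt.differentiableWithinAt)
    intro x hx
    rw [interior_Icc] at hx
    rw [(hf x).deriv]
    exact h x ⟨hx.1.le, hx.2.le⟩
  exact hm (Set.left_mem_Icc.2 hst) (Set.right_mem_Icc.2 hst) hst

private lemma nonneg_aux {κ y y' : ℝ → ℝ} {k : ℝ} (hk : 0 ≤ k)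
    (hκ : ∀ t, 0 ≤ t → κ t ≤ -k)
    (hy : ∀ t, HasDerivAt y (y' t) t)
    (hy' : ∀ t, HasDerivAt y' (-(κ t * y t)) t)
    (h0 : 0 ≤ y 0) (h0' : 0 ≤ y' 0)
    (hev : ∃ δ > (0:ℝ), ∀ u, 0 < u → u < δ → 0 < y u) :
    ∀ t, 0 ≤ t → 0 ≤ y t := by
  intro t ht
  by_contra hneg
  push_neg at hneg
  obtain ⟨δ, hδ, hδy⟩ := hev
  have ht0 : 0 < t := by
    rcases lt_or_eq_of_le ht with h | h
    · exact h
    · exfalso; rw [← h] at hneg; linarith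
  have hδt : δ ≤ t := by
    by_contra hlt
    push_neg at hlt
    exact absurd (hδy t ht0 hlt) (by linarith)
  set S : Set ℝ := {u : ℝ | u ≤ t ∧ y u ≤ 0 ∧ 0 < u} with hS
  have htS : t ∈ S := ⟨le_refl t, hneg.le, ht0⟩
  have hbdd : BddBelow S := ⟨0, fun u hu => hu.2.2.le⟩
  set T := sInf S with hT
  have hTle : ∀ u ∈ S, T ≤ u := fun u hu => csInf_le hbdd hu
  have hTδ : δ ≤ T := by
    apply le_csInf ⟨t, htS⟩
    intro u hu
    by_contra hlt
    push_neg at hlt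
    exact absurd hu.2.1 (not_le.2 (hδy u hu.2.2 hlt))
  have hT0 : 0 < T := lt_of_lt_of_le hδ hTδ
  have hTt : T ≤ t := csInf_le hbdd htS
  -- y T ≤ 0
  have hyT : y T ≤ 0 := by
    by_contra hpos
    push_neg at hpos
    have hevT : ∀ᶠ u in 𝓝 T, 0 < y u :=
      (hy T).continuousAt.eventually (eventually_gt_nhds hpos)
    rw [Metric.eventually_nhds_iff] at hevT
    obtain ⟨ε, hε, hεy⟩ := hevT
    have hlb : T + ε ≤ T := by
      apply le_csInf ⟨t, htS⟩
      intro u hu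
      by_contra hlt
      push_neg at hlt
      have hTu : T ≤ u := hTle u hu
      have : dist u T < ε := by
        rw [Real.dist_eq, abs_of_nonneg (by linarith)]
        linarith
      exact absurd hu.2.1 (not_le.2 (hεy this))
    linarith
  -- y ≥ 0 on [0, T]
  have hynnlt : ∀ u, 0 ≤ u → u < T → 0 ≤ y u := by
    intro u hu huT
    rcases lt_or_eq_of_le hu with h | h
    · by_contra hyu
      push_neg at hyu
      have : u ∈ S := ⟨huT.le.trans hTt, hyu.le, h⟩
      exact absurd (hTle u this) (not_le.2 huT)
    · rw [← h]; exact h0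
  have hyT0 : 0 ≤ y T := by
    have htend : Filter.Tendsto y (𝓝[<] T) (𝓝 (y T)) :=
      (hy T).continuousAt.continuousWithinAt
    apply ge_of_tendsto htend
    filter_upwards [Ioo_mem_nhdsLT_of_mem
      (show T ∈ Set.Ioc (0:ℝ) T from ⟨hT0, le_refl T⟩)] with v hv
    exact hynnlt v hv.1.le hv.2
  have hynn : ∀ u ∈ Set.Icc (0:ℝ) T, 0 ≤ y u := by
    rintro u ⟨hu0, huT⟩
    rcases lt_or_eq_of_le huT with h | h
    · exact hynnlt u hu0 h
    · rw [h]; exact hyT0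
  -- y' ≥ 0 on [0, T]
  have hy'nn : ∀ u ∈ Set.Icc (0:ℝ) T, 0 ≤ y' u := by
    rintro u ⟨hu0, huT⟩
    have : y' 0 ≤ y' u := by
      apply mono_aux hy' hu0
      rintro v ⟨hv0, hvu⟩
      have h1 : κ v ≤ 0 := (hκ v hv0).trans (by linarith)
      have h2 : 0 ≤ y v := hynn v ⟨hv0, hvu.trans huT⟩
      nlinarith [mul_nonneg (neg_nonneg.2 h1) h2]
    linarith
  -- y (δ/2) ≤ y T, but y(δ/2) > 0 and y T ≤ 0: contradiction
  have hmono : y (δ / 2) ≤ y T := by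
    apply mono_aux hy (by linarith)
    rintro v ⟨hv1, hv2⟩
    exact hy'nn v ⟨by linarith, hv2⟩
  have : 0 < y (δ / 2) := hδy (δ / 2) (by linarith) (by linarith)
  linarith

theorem stmt_4 (κ a a' b b' : ℝ → ℝ) (k K : ℝ)
    (hk : 0 < k) (hkK : k ≤ K)
    (hκc : Continuous κ)
    (hκ : ∀ t : ℝ, 0 ≤ t → -K ≤ κ t ∧ κ t ≤ -k)
    (ha : ∀ t : ℝ, HasDerivAt a (a' t) t)
    (ha' : ∀ t : ℝ, HasDerivAt a' (-(κ t * a t)) t)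
    (ha0 : a 0 = 1) (ha'0 : a' 0 = 0)
    (hb : ∀ t : ℝ, HasDerivAt b (b' t) t)
    (hb' : ∀ t : ℝ, HasDerivAt b' (-(κ t * b t)) t)
    (hb0 : b 0 = 0) (hb'0 : b' 0 = 1) :
    ∀ t : ℝ, 0 < t →
      0 < (b' t) ^ 2 - 1 ∧ 0 < (b t) ^ 2 ∧
      (k / K) * (((a t) ^ 2 - 1) / (b t) ^ 2) ≤ (a' t) ^ 2 / ((b' t) ^ 2 - 1) := by
  have hK : 0 < K := lt_of_lt_of_le hk hkK
  -- a > 0 just after 0 (by continuity, a 0 = 1)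
  have heva : ∃ δ > (0:ℝ), ∀ u, 0 < u → u < δ → 0 < a u := by
    have : ∀ᶠ u in 𝓝 (0:ℝ), 0 < a u :=
      (ha 0).continuousAt.eventually (eventually_gt_nhds (by rw [ha0]; norm_num))
    rw [Metric.eventually_nhds_iff] at this
    obtain ⟨ε, hε, hεy⟩ := this
    exact ⟨ε, hε, fun u hu hu' => hεy (by rw [Real.dist_eq, sub_zero, abs_of_pos hu]; exact hu')⟩
  -- b > 0 just after 0 (since b' is near 1)
  have hevb : ∃ δ > (0:ℝ), ∀ u, 0 < u → u < δ → 0 < b u := by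
    have : ∀ᶠ u in 𝓝 (0:ℝ), (1:ℝ)/2 < b' u :=
      (hb' 0).continuousAt.eventually (eventually_gt_nhds (by rw [hb'0]; norm_num))
    rw [Metric.eventually_nhds_iff] at this
    obtain ⟨ε, hε, hεy⟩ := this
    refine ⟨ε, hε, fun u hu hu' => ?_⟩
    have hmono : b 0 - 0/2 ≤ b u - u/2 := by
      apply mono_aux (f' := fun s => b' s - 1/2)
        (fun s => (hb s).sub ((hasDerivAt_id s).div_const 2)) hu.le
      rintro v ⟨hv0, hvu⟩
      have : (1:ℝ)/2 < b' v := hεy (by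
        rw [Real.dist_eq, sub_zero, abs_of_nonneg hv0]; linarith)
      linarith
    rw [hb0] at hmono
    linarith
  have hannn : ∀ t, 0 ≤ t → 0 ≤ a t :=
    nonneg_aux hk.le (fun t ht => (hκ t ht).2) ha ha' (by rw [ha0]; norm_num)
      (by rw [ha'0]) heva
  have hbnn : ∀ t, 0 ≤ t → 0 ≤ b t :=
    nonneg_aux hk.le (fun t ht => (hκ t ht).2) hb hb' (by rw [hb0])
      (by rw [hb'0]; norm_num) hevb
  -- a' ≥ 0 and b' ≥ 1 on [0,∞)
  have ha'nn : ∀ t, 0 ≤ t → 0 ≤ a' t := by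
    intro t ht
    have : a' 0 ≤ a' t := by
      apply mono_aux ha' ht
      rintro v ⟨hv0, _⟩
      have h1 : κ v ≤ 0 := (hκ v hv0).2.trans (by linarith)
      nlinarith [mul_nonneg (neg_nonneg.2 h1) (hannn v hv0)]
    rw [ha'0] at this; linarith
  have hb'ge : ∀ t, 0 ≤ t → 1 ≤ b' t := by
    intro t ht
    have : b' 0 ≤ b' t := by
      apply mono_aux hb' ht
      rintro v ⟨hv0, _⟩
      have h1 : κ v ≤ 0 := (hκ v hv0).2.trans (by linarith)
      nlinarith [mul_nonneg (neg_nonneg.2 h1) (hbnn v hv0)]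
    rw [hb'0] at this; linarith
  -- a ≥ 1 and b ≥ t on [0,∞)
  have hage : ∀ t, 0 ≤ t → 1 ≤ a t := by
    intro t ht
    have : a 0 ≤ a t := mono_aux ha ht (fun v hv => ha'nn v hv.1)
    rw [ha0] at this; linarith
  have hbge : ∀ t, 0 ≤ t → t ≤ b t := by
    intro t ht
    have : b 0 - 0 ≤ b t - t := by
      apply mono_aux (f' := fun s => b' s - 1)
        (fun s => (hb s).sub (hasDerivAt_id s)) ht
      rintro v ⟨hv0, _⟩
      linarith [hb'ge v hv0]
    rw [hb0] at this; linarith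
  intro t ht
  have hbt : 0 < b t := lt_of_lt_of_le ht (hbge t ht.le)
  -- Energy estimate 1 : a' t ^ 2 ≥ k * (a t ^ 2 - 1)
  have hE1 : k * (a t ^ 2 - 1) ≤ a' t ^ 2 := by
    have hmono : a' 0 ^ 2 - k * a 0 ^ 2 ≤ a' t ^ 2 - k * a t ^ 2 := by
      apply mono_aux (f' := fun u =>
          (2:ℕ) * a' u ^ (2-1) * (-(κ u * a u)) - k * ((2:ℕ) * a u ^ (2-1) * a' u))
        (fun u => (((ha' u).pow 2).sub (((ha u).pow 2).const_mul k))) ht.le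
      rintro v ⟨hv0, _⟩
      have h1 : -κ v - k ≥ 0 := by linarith [(hκ v hv0).2]
      have h2 := hannn v hv0
      have h3 := ha'nn v hv0
      norm_num
      nlinarith [mul_nonneg (mul_nonneg h2 h3) h1]
    rw [ha0, ha'0] at hmono
    nlinarith
  -- Energy estimate 2 : b' t ^ 2 - 1 ≤ K * b t ^ 2
  have hE2 : b' t ^ 2 - 1 ≤ K * b t ^ 2 := by
    have hmono : K * b 0 ^ 2 - b' 0 ^ 2 ≤ K * b t ^ 2 - b' t ^ 2 := by
      apply mono_aux (f' := fun u =>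
          K * ((2:ℕ) * b u ^ (2-1) * b' u) - (2:ℕ) * b' u ^ (2-1) * (-(κ u * b u)))
        (fun u => ((((hb u).pow 2).const_mul K).sub ((hb' u).pow 2))) ht.le
      rintro v ⟨hv0, _⟩
      have h1 : K + κ v ≥ 0 := by linarith [(hκ v hv0).1]
      have h2 := hbnn v hv0
      have h3 : (0:ℝ) ≤ b' v := by linarith [hb'ge v hv0]
      norm_num
      nlinarith [mul_nonneg (mul_nonneg h2 h3) h1]
    rw [hb0, hb'0] at hmono
    nlinarith
  -- Energy estimate 3 : k * b t ^ 2 ≤ b' t ^ 2 - 1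
  have hE3 : k * b t ^ 2 ≤ b' t ^ 2 - 1 := by
    have hmono : b' 0 ^ 2 - k * b 0 ^ 2 ≤ b' t ^ 2 - k * b t ^ 2 := by
      apply mono_aux (f' := fun u =>
          (2:ℕ) * b' u ^ (2-1) * (-(κ u * b u)) - k * ((2:ℕ) * b u ^ (2-1) * b' u))
        (fun u => (((hb' u).pow 2).sub (((hb u).pow 2).const_mul k))) ht.le
      rintro v ⟨hv0, _⟩
      have h1 : -κ v - k ≥ 0 := by linarith [(hκ v hv0).2]
      have h2 := hbnn v hv0
      have h3 : (0:ℝ) ≤ b' v := by linarith [hb'ge v hv0]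
      norm_num
      nlinarith [mul_nonneg (mul_nonneg h2 h3) h1]
    rw [hb0, hb'0] at hmono
    nlinarith
  have hD : 0 < b' t ^ 2 - 1 := lt_of_lt_of_le (by positivity) hE3
  refine ⟨hD, by positivity, ?_⟩
  have hA : (0:ℝ) ≤ a t ^ 2 - 1 := by nlinarith [hage t ht.le]
  rw [div_mul_div_comm, div_le_div_iff₀ (by positivity) hD]
  nlinarith [mul_le_mul_of_nonneg_right hE1 hD.le,
    mul_le_mul_of_nonneg_left hE2 (sq_nonneg (a' t)),
    mul_nonneg (mul_nonneg hk.le hA) hD.le]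
end

section
/- Let κ : ℝ → ℝ be continuous with κ(t) ≤ -k for all t ≥ 0, k > 0, and let a solve a'' + κ a = 0 with a(0)=1, a'(0)=0. Then for all t ≥ 0, a(t) ≥ cosh(√k · t). -/
/-!
Since `κ ≤ -k ≤ 0`, the solution stays positive: before its first zero `a'' = -κ a ≥ 0`, so
`a' ≥ a'(0) = 0` and `a ≥ a(0) = 1`. Then Sturm comparison with `c(t) = cosh (√k t)`, which solves
`c'' - k c = 0`: the Wronskian `W = a' c - a c'` has `W' = (-k - κ) a c ≥ 0` and `W(0) = 0`, so
`(a / c)' = W / c² ≥ 0` and `a / c ≥ a(0) / c(0) = 1`.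
-/

open Set

lemma monotoneOn_of_hasDerivAt_nonneg {D : Set ℝ} (hD : Convex ℝ D) {f f' : ℝ → ℝ}
    (hf : ∀ x ∈ D, HasDerivAt f (f' x) x) (hf'₀ : ∀ x ∈ interior D, 0 ≤ f' x) :
    MonotoneOn f D :=
  monotoneOn_of_hasDerivWithinAt_nonneg hD
    (fun x hx => (hf x hx).continuousAt.continuousWithinAt)
    (fun x hx => (hf x (interior_subset hx)).hasDerivWithinAt) hf'₀

section SecondOrder

variable {κ a a' : ℝ → ℝ}

lemma monotoneOn_Icc_of_nonneg_of_coeff_nonpos (ha : ∀ t, HasDerivAt a (a' t) t)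
    (ha' : ∀ t, HasDerivAt a' (-(κ t * a t)) t) (hκ : ∀ t, 0 ≤ t → κ t ≤ 0) (ha'0 : 0 ≤ a' 0)
    {T : ℝ} (ha_nonneg : ∀ t ∈ Ioo 0 T, 0 ≤ a t) : MonotoneOn a (Icc 0 T) := by
  have ha'_mono : MonotoneOn a' (Icc 0 T) :=
    monotoneOn_of_hasDerivAt_nonneg (convex_Icc 0 T) (fun t _ => ha' t) fun t ht => by
      rw [interior_Icc] at ht
      nlinarith [hκ t ht.1.le, ha_nonneg t ht]
  refine monotoneOn_of_hasDerivAt_nonneg (convex_Icc 0 T) (fun t _ => ha t) fun t ht => ?_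
  rw [interior_Icc] at ht
  exact ha'0.trans (ha'_mono ⟨le_rfl, ht.1.le.trans ht.2.le⟩ (Ioo_subset_Icc_self ht) ht.1.le)

theorem pos_of_coeff_nonpos (ha : ∀ t, HasDerivAt a (a' t) t)
    (ha' : ∀ t, HasDerivAt a' (-(κ t * a t)) t) (hκ : ∀ t, 0 ≤ t → κ t ≤ 0)
    (ha0 : 0 < a 0) (ha'0 : 0 ≤ a' 0) {t : ℝ} (ht : 0 ≤ t) : 0 < a t := by
  by_contra hat
  set S := Ici 0 ∩ a ⁻¹' Iic 0
  have hS_bdd : BddBelow S := ⟨0, fun _ hu => hu.1⟩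
  have hS_closed : IsClosed S :=
    isClosed_Ici.inter (isClosed_Iic.preimage (continuous_iff_continuousAt.2 fun u =>
      (ha u).continuousAt))
  obtain ⟨hT0, haT⟩ : sInf S ∈ S := hS_closed.csInf_mem ⟨t, ht, not_lt.1 hat⟩ hS_bdd
  have ha_nonneg : ∀ u ∈ Ioo 0 (sInf S), 0 ≤ a u := fun u hu => by
    by_contra hau
    exact (csInf_le hS_bdd ⟨hu.1.le, (not_le.1 hau).le⟩).not_gt hu.2
  have := monotoneOn_Icc_of_nonneg_of_coeff_nonpos ha ha' hκ ha'0 ha_nonneg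
    (left_mem_Icc.2 hT0) (right_mem_Icc.2 hT0) hT0
  exact (ha0.trans_le this).not_ge haT

end SecondOrder

section Sturm

variable {κ μ a a' c c' : ℝ → ℝ}

theorem monotoneOn_div_of_sturm_comparison (ha : ∀ t, HasDerivAt a (a' t) t)
    (ha' : ∀ t, HasDerivAt a' (-(κ t * a t)) t) (hc : ∀ t, HasDerivAt c (c' t) t)
    (hc' : ∀ t, HasDerivAt c' (-(μ t * c t)) t) (hκμ : ∀ t, 0 ≤ t → κ t ≤ μ t)
    (ha_nonneg : ∀ t, 0 ≤ t → 0 ≤ a t) (hc_pos : ∀ t, 0 ≤ t → 0 < c t)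
    (hW0 : a 0 * c' 0 ≤ a' 0 * c 0) : MonotoneOn (fun t => a t / c t) (Ici 0) := by
  have hW : ∀ t, HasDerivAt (fun s => a' s * c s - a s * c' s) ((μ t - κ t) * a t * c t) t :=
    fun t => (((ha' t).mul (hc t)).sub ((ha t).mul (hc' t))).congr_deriv (by ring)
  have hW_mono : MonotoneOn (fun s => a' s * c s - a s * c' s) (Ici 0) :=
    monotoneOn_of_hasDerivAt_nonneg (convex_Ici 0) (fun t _ => hW t) fun t ht => by
      rw [interior_Ici] at ht
      have := sub_nonneg.2 (hκμ t ht.le)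
      have := ha_nonneg t ht.le
      have := hc_pos t ht.le
      positivity
  refine monotoneOn_of_hasDerivAt_nonneg (convex_Ici 0)
    (fun t ht => (ha t).div (hc t) (hc_pos t ht).ne') fun t ht => ?_
  rw [interior_Ici] at ht
  have hWt : 0 ≤ a' t * c t - a t * c' t :=
    (sub_nonneg.2 hW0).trans (hW_mono self_mem_Ici (mem_Ici.2 (le_of_lt ht)) (le_of_lt ht))
  positivity

end Sturm

theorem stmt_5_general (κ a a' : ℝ → ℝ) (k : ℝ)
    (hk : 0 < k)
    (hκ : ∀ t : ℝ, 0 ≤ t → κ t ≤ -k)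
    (ha : ∀ t : ℝ, HasDerivAt a (a' t) t)
    (ha' : ∀ t : ℝ, HasDerivAt a' (-(κ t * a t)) t)
    (ha0 : a 0 = 1) (ha'0 : a' 0 = 0) :
    ∀ t : ℝ, 0 ≤ t → Real.cosh (Real.sqrt k * t) ≤ a t := by
  intro t ht
  set s := Real.sqrt k
  have hs2 : s * s = k := Real.mul_self_sqrt hk.le
  have hc : ∀ u, HasDerivAt (fun v => Real.cosh (s * v)) (s * Real.sinh (s * u)) u := fun u => by
    simpa [mul_comm] using ((hasDerivAt_id u).const_mul s).cosh
  have hc' : ∀ u, HasDerivAt (fun v => s * Real.sinh (s * v)) (-(-k * Real.cosh (s * u))) u :=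
    fun u => by
      refine ((((hasDerivAt_id u).const_mul s).sinh).const_mul s).congr_deriv ?_
      rw [← hs2]; simp only [id, mul_one]; ring
  have ha_pos : ∀ u, 0 ≤ u → 0 < a u :=
    fun u => pos_of_coeff_nonpos ha ha' (fun v hv => (hκ v hv).trans (neg_nonpos.2 hk.le))
      (ha0 ▸ one_pos) ha'0.ge
  have h_mono := monotoneOn_div_of_sturm_comparison ha ha' hc hc' hκ
    (fun u hu => (ha_pos u hu).le) (fun u _ => Real.cosh_pos _) (by simp [ha0, ha'0])
  have := h_mono self_mem_Ici ht ht
  simp only [mul_zero, Real.cosh_zero, ha0, div_one] at this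
  rwa [one_le_div (Real.cosh_pos _)] at this

theorem stmt_5 (κ a a' : ℝ → ℝ) (k : ℝ)
    (hk : 0 < k)
    (hκc : Continuous κ)
    (hκ : ∀ t : ℝ, 0 ≤ t → κ t ≤ -k)
    (ha : ∀ t : ℝ, HasDerivAt a (a' t) t)
    (ha' : ∀ t : ℝ, HasDerivAt a' (-(κ t * a t)) t)
    (ha0 : a 0 = 1) (ha'0 : a' 0 = 0) :
    ∀ t : ℝ, 0 ≤ t → Real.cosh (Real.sqrt k * t) ≤ a t :=
  stmt_5_general κ a a' k hk hκ ha ha' ha0 ha'0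
end

section
/- Let κ : ℝ → ℝ be continuous with -K ≤ κ ≤ -k, 0 < k ≤ K, and let a, b solve y'' + κ y = 0 with initial data (1,0) and (0,1). Then for every τ > 0 there is a constant C > 0 depending only on τ, k, K such that b(t)/a(t) ≥ C for all t ≥ τ. -/
open Set

/-- Monotone comparison from a pointwise derivative. -/
lemma mono_of_deriv (f f' : ℝ → ℝ) (hf : ∀ t, HasDerivAt f (f' t) t)
    {x y : ℝ} (hxy : x ≤ y) (h : ∀ t ∈ Set.Ioo x y, 0 ≤ f' t) : f x ≤ f y := by
  have hcont : Continuous f := Differentiable.continuous (fun t => (hf t).differentiableAt)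
  have hmono : MonotoneOn f (Icc x y) := by
    apply monotoneOn_of_deriv_nonneg (convex_Icc x y) hcont.continuousOn
    · intro t ht
      exact ((hf t).differentiableAt).differentiableWithinAt
    · intro t ht
      rw [interior_Icc] at ht
      rw [(hf t).deriv]
      exact h t ht
  exact hmono (left_mem_Icc.2 hxy) (right_mem_Icc.2 hxy) hxy

/-- Strict monotone comparison from a pointwise derivative. -/
lemma smono_of_deriv (f f' : ℝ → ℝ) (hf : ∀ t, HasDerivAt f (f' t) t)
    {x y : ℝ} (hxy : x < y) (h : ∀ t ∈ Set.Ioo x y, 0 < f' t) : f x < f y := by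
  have hcont : Continuous f := Differentiable.continuous (fun t => (hf t).differentiableAt)
  have hmono : StrictMonoOn f (Icc x y) := by
    apply strictMonoOn_of_deriv_pos (convex_Icc x y) hcont.continuousOn
    intro t ht
    rw [interior_Icc] at ht
    rw [(hf t).deriv]
    exact h t ht
  exact hmono (left_mem_Icc.2 hxy.le) (right_mem_Icc.2 hxy.le) hxy

/-- Core positivity lemma: if f'' = -κ f with κ ≤ 0 on [t0,∞), f t0 > 0, f' t0 ≥ 0,
then f > 0 on [t0, ∞). -/
lemma core_pos (κ f f' : ℝ → ℝ) (t0 : ℝ)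
    (hκ : ∀ t, t0 ≤ t → κ t ≤ 0)
    (hf : ∀ t, HasDerivAt f (f' t) t)
    (hf' : ∀ t, HasDerivAt f' (-(κ t * f t)) t)
    (h0 : 0 < f t0) (h0' : 0 ≤ f' t0) :
    ∀ t, t0 ≤ t → 0 < f t := by
  by_contra hcon
  push_neg at hcon
  obtain ⟨t1', ht1', hft1'⟩ := hcon
  have hcontf : Continuous f := Differentiable.continuous (fun t => (hf t).differentiableAt)
  set S : Set ℝ := {t | t0 ≤ t ∧ f t ≤ 0} with hS
  have hSc : IsClosed S := by
    have : S = Ici t0 ∩ f ⁻¹' (Iic 0) := by ext t; simp [hS, mem_Ici, mem_Iic]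
    rw [this]
    exact isClosed_Ici.inter (isClosed_Iic.preimage hcontf)
  have hSne : S.Nonempty := ⟨t1', ht1', hft1'⟩
  have hSbd : BddBelow S := ⟨t0, fun x hx => hx.1⟩
  set t1 := sInf S with ht1def
  have ht1S : t1 ∈ S := hSc.csInf_mem hSne hSbd
  have ht1 : t0 < t1 := by
    rcases lt_or_eq_of_le ht1S.1 with h | h
    · exact h
    · exfalso; rw [← h] at ht1S; linarith [ht1S.2]
  have hpos : ∀ t, t0 ≤ t → t < t1 → 0 < f t := by
    intro t h1 h2
    by_contra h
    push_neg at h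
    exact absurd (csInf_le hSbd ⟨h1, h⟩) (not_le.2 h2)
  -- f' is nondecreasing on [t0, t1]
  have hmono' : ∀ t, t0 ≤ t → t ≤ t1 → f' t0 ≤ f' t := by
    intro t h1 h2
    apply mono_of_deriv f' (fun s => -(κ s * f s)) hf' h1
    intro s hs
    have hκs : κ s ≤ 0 := hκ s (le_of_lt hs.1)
    have hfs : 0 < f s := hpos s (le_of_lt hs.1) (lt_of_lt_of_le hs.2 h2)
    nlinarith
  have hft1 : f t0 ≤ f t1 := by
    apply mono_of_deriv f f' hf ht1.le
    intro s hs
    have := hmono' s hs.1.le hs.2.le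
    linarith
  linarith [ht1S.2]

/-- Positivity lemma for zero initial value and positive initial slope. -/
lemma core_pos0 (κ f f' : ℝ → ℝ) (t0 : ℝ)
    (hκ : ∀ t, t0 ≤ t → κ t ≤ 0)
    (hf : ∀ t, HasDerivAt f (f' t) t)
    (hf' : ∀ t, HasDerivAt f' (-(κ t * f t)) t)
    (h0 : f t0 = 0) (h0' : 0 < f' t0) :
    ∀ t, t0 < t → 0 < f t := by
  have hcont' : Continuous f' := Differentiable.continuous (fun t => (hf' t).differentiableAt)
  have hev : ∀ᶠ s in nhds t0, 0 < f' s :=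
    (hcont'.tendsto t0).eventually (eventually_gt_nhds h0')
  obtain ⟨δ, hδpos, hball⟩ := Metric.eventually_nhds_iff.mp hev
  set t2 := t0 + δ / 2 with ht2def
  have ht2 : t0 < t2 := by simp [ht2def]; linarith
  have hball' : ∀ s, t0 ≤ s → s ≤ t2 → 0 < f' s := by
    intro s h1 h2
    apply hball
    rw [Real.dist_eq, abs_lt]
    rw [ht2def] at h2
    constructor <;> linarith
  -- f is positive on (t0, t2]
  have hpos2 : ∀ t, t0 < t → t ≤ t2 → 0 < f t := by
    intro t h1 h2
    have : f t0 < f t := by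
      apply smono_of_deriv f f' hf h1
      intro s hs
      exact hball' s hs.1.le (le_trans hs.2.le h2)
    linarith [h0 ▸ this]
  intro t ht
  rcases le_or_gt t t2 with h | h
  · exact hpos2 t ht h
  · -- use core_pos from base point t2
    have := core_pos κ f f' t2 (fun s hs => hκ s (le_trans ht2.le hs)) hf hf'
      (hpos2 t2 ht2 le_rfl) (hball' t2 ht2.le le_rfl).le
    exact this t h.le

theorem stmt_10 (κ a a' b b' : ℝ → ℝ) (k K τ : ℝ)
    (hk : 0 < k) (hkK : k ≤ K) (hτ : 0 < τ)
    (hκc : Continuous κ)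
    (hκ : ∀ t : ℝ, 0 ≤ t → -K ≤ κ t ∧ κ t ≤ -k)
    (ha : ∀ t : ℝ, HasDerivAt a (a' t) t)
    (ha' : ∀ t : ℝ, HasDerivAt a' (-(κ t * a t)) t)
    (ha0 : a 0 = 1) (ha'0 : a' 0 = 0)
    (hb : ∀ t : ℝ, HasDerivAt b (b' t) t)
    (hb' : ∀ t : ℝ, HasDerivAt b' (-(κ t * b t)) t)
    (hb0 : b 0 = 0) (hb'0 : b' 0 = 1) :
    ∃ C : ℝ, 0 < C ∧ ∀ t : ℝ, τ ≤ t → C ≤ b t / a t := by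
  have hκ0 : ∀ t, (0:ℝ) ≤ t → κ t ≤ 0 := fun t ht => by linarith [(hκ t ht).2]
  -- a is positive on [0, ∞)
  have hapos : ∀ t, (0:ℝ) ≤ t → 0 < a t :=
    core_pos κ a a' 0 hκ0 ha ha' (by rw [ha0]; norm_num) (by rw [ha'0])
  -- b is positive on (0, ∞)
  have hbpos : ∀ t, (0:ℝ) < t → 0 < b t :=
    core_pos0 κ b b' 0 hκ0 hb hb' hb0 (by rw [hb'0]; norm_num)
  -- the Wronskian is constant equal to 1
  set w : ℝ → ℝ := fun t => a t * b' t - a' t * b t with hwdef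
  have hw : ∀ t, HasDerivAt w 0 t := by
    intro t
    have h1 := ((ha t).mul (hb' t)).sub ((ha' t).mul (hb t))
    have h2 : a' t * b' t + a t * -(κ t * b t) - (-(κ t * a t) * b t + a' t * b' t) = 0 := by
      ring
    rw [h2] at h1
    exact h1
  have hwconst : ∀ t, w t = 1 := by
    intro t
    have := is_const_of_deriv_eq_zero (f := w)
      (fun s => (hw s).differentiableAt) (fun s => (hw s).deriv) t 0
    rw [this]
    simp [hwdef, ha0, ha'0, hb0, hb'0]
  -- the function g t = b t * a τ - a t * b τ
  set g : ℝ → ℝ := fun t => b t * a τ - a t * b τ with hgdef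
  set g' : ℝ → ℝ := fun t => b' t * a τ - a' t * b τ with hg'def
  have hg : ∀ t, HasDerivAt g (g' t) t := fun t =>
    ((hb t).mul_const (a τ)).sub ((ha t).mul_const (b τ))
  have hg' : ∀ t, HasDerivAt g' (-(κ t * g t)) t := by
    intro t
    have h1 := ((hb' t).mul_const (a τ)).sub ((ha' t).mul_const (b τ))
    have h2 : -(κ t * b t) * a τ - -(κ t * a t) * b τ = -(κ t * g t) := by
      simp only [hgdef]; ring
    rw [h2] at h1
    exact h1
  have hgτ : g τ = 0 := by simp [hgdef]; ring
  have hg'τ : g' τ = 1 := by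
    have := hwconst τ
    simp only [hwdef] at this
    simp only [hg'def]
    linarith
  have hgpos : ∀ t, τ < t → 0 < g t :=
    core_pos0 κ g g' τ (fun t ht => hκ0 t (le_trans hτ.le ht)) hg hg' hgτ
      (by rw [hg'τ]; norm_num)
  -- conclude
  have haτ : 0 < a τ := hapos τ hτ.le
  have hbτ : 0 < b τ := hbpos τ hτ
  refine ⟨b τ / a τ, div_pos hbτ haτ, ?_⟩
  intro t ht
  have hat : 0 < a t := hapos t (le_trans hτ.le ht)
  rw [div_le_div_iff₀ haτ hat]
  rcases eq_or_lt_of_le ht with h | h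
  · rw [← h]
  · have := hgpos t h
    simp only [hgdef] at this
    nlinarith
end

section
/- Let κ : ℝ → ℝ be continuous with -K ≤ κ ≤ -k, 0 < k ≤ K, and let a, b solve y'' + κ y = 0 with initial data (1,0) and (0,1). Then for every τ > 0 there exists r > 0 depending only on τ, k, K such that for all t ≥ τ: |a'(t)| ≥ r |b'(t)|. -/
/-!
With `q = -κ ≥ k`, the function `a²` satisfies `(a²)'' = 2a'² + 2q a² ≥ 2k a²`, and integrating
twice from `a(0)² = 1`, `(a²)'(0) = 0` gives first `a² ≥ 1` and then `a a' ≥ k t`, `a² ≥ 1 + k t²`.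
The Wronskian `a b' - a' b` is identically `1`, so `(b / a)' = 1 / a² ≤ 1 / (1 + k t²)`, and
comparison with `arctan (√k t) / √k` keeps `b / a` in `[0, π / (2√k)]`. Finally
`b' = 1 / a + a' · (b / a)` and `1 / |a| ≤ |a'| / (k τ)` for `t ≥ τ`.
-/

open Real Set

lemma le_of_hasDerivAt_le_of_le {f g f' g' : ℝ → ℝ} {x₀ : ℝ}
    (hf : ∀ t, x₀ ≤ t → HasDerivAt f (f' t) t) (hg : ∀ t, x₀ ≤ t → HasDerivAt g (g' t) t)
    (h₀ : g x₀ ≤ f x₀) (h : ∀ t, x₀ ≤ t → g' t ≤ f' t) :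
    ∀ t, x₀ ≤ t → g t ≤ f t := by
  have hmono : MonotoneOn (fun t => f t - g t) (Ici x₀) := by
    refine monotoneOn_of_hasDerivWithinAt_nonneg (f' := fun t => f' t - g' t) (convex_Ici x₀)
      (HasDerivAt.continuousOn fun t ht => (hf t ht).sub (hg t ht))
      (fun t ht => ((hf t ?_).sub (hg t ?_)).hasDerivWithinAt) fun t ht => ?_
    all_goals rw [interior_Ici] at ht
    exacts [ht.le, ht.le, sub_nonneg.2 (h t ht.le)]
  intro t ht
  have := hmono self_mem_Ici ht ht
  linarith

lemma growth_of_hasDerivAt_eq_mul {q y y' : ℝ → ℝ} {k : ℝ} (hk : 0 ≤ k)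
    (hy : ∀ t, HasDerivAt y (y' t) t) (hy' : ∀ t, HasDerivAt y' (q t * y t) t)
    (hq : ∀ t, 0 ≤ t → k ≤ q t) (h₀ : y 0 = 1) (h₀' : y' 0 = 0) :
    ∀ t, 0 ≤ t → k * t ≤ y t * y' t ∧ 1 + k * t ^ 2 ≤ y t ^ 2 := by
  have hsq : ∀ t, HasDerivAt (fun t => y t ^ 2) (2 * (y t * y' t)) t := fun t =>
    ((hy t).pow 2).congr_deriv (by push_cast; ring)
  have hmul : ∀ t, HasDerivAt (fun t => y t * y' t) (y' t ^ 2 + q t * y t ^ 2) t := fun t =>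
    ((hy t).mul (hy' t)).congr_deriv (by ring)
  have hq₀ : ∀ t, 0 ≤ t → 0 ≤ q t := fun t ht => hk.trans (hq t ht)
  have hmul_nonneg : ∀ t, 0 ≤ t → 0 ≤ y t * y' t :=
    le_of_hasDerivAt_le_of_le (fun t _ => hmul t) (fun _ _ => hasDerivAt_const _ _) (by simp [h₀'])
      fun t ht => by have := hq₀ t ht; positivity
  have hsq_ge_one : ∀ t, 0 ≤ t → 1 ≤ y t ^ 2 :=
    le_of_hasDerivAt_le_of_le (fun t _ => hsq t) (fun _ _ => hasDerivAt_const _ _) (by simp [h₀])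
      fun t ht => by linarith [hmul_nonneg t ht]
  have hmul_ge : ∀ t, 0 ≤ t → k * t ≤ y t * y' t :=
    le_of_hasDerivAt_le_of_le (fun t _ => hmul t) (fun t _ => (hasDerivAt_id t).const_mul k)
      (by simp [h₀'])
      fun t ht => by
        have := mul_le_mul (hq t ht) (hsq_ge_one t ht) zero_le_one (hq₀ t ht)
        linarith [sq_nonneg (y' t)]
  have hsq_ge : ∀ t, 0 ≤ t → 1 + k * t ^ 2 ≤ y t ^ 2 :=
    le_of_hasDerivAt_le_of_le (fun t _ => hsq t)
      (fun t _ => ((hasDerivAt_pow 2 t).const_mul k).const_add 1) (by simp [h₀])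
      fun t ht => by push_cast; linarith [hmul_ge t ht]
  exact fun t ht => ⟨hmul_ge t ht, hsq_ge t ht⟩

lemma wronskian_eq_const {p a a' b b' : ℝ → ℝ}
    (ha : ∀ t, HasDerivAt a (a' t) t) (ha' : ∀ t, HasDerivAt a' (p t * a t) t)
    (hb : ∀ t, HasDerivAt b (b' t) t) (hb' : ∀ t, HasDerivAt b' (p t * b t) t) (t : ℝ) :
    a t * b' t - a' t * b t = a 0 * b' 0 - a' 0 * b 0 := by
  have hW : ∀ t, HasDerivAt (fun t => a t * b' t - a' t * b t) 0 t := fun t =>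
    (((ha t).mul (hb' t)).sub ((ha' t).mul (hb t))).congr_deriv (by ring)
  exact is_const_of_deriv_eq_zero (fun t => (hW t).differentiableAt) (fun t => (hW t).deriv) t 0

lemma div_mem_Icc_of_wronskian {a a' b b' : ℝ → ℝ} {k : ℝ} (hk : 0 < k)
    (ha : ∀ t, HasDerivAt a (a' t) t) (hb : ∀ t, HasDerivAt b (b' t) t)
    (hW : ∀ t, a t * b' t - a' t * b t = 1) (hb₀ : b 0 = 0)
    (hsq : ∀ t, 0 ≤ t → 1 + k * t ^ 2 ≤ a t ^ 2) :
    ∀ t, 0 ≤ t → b t / a t ∈ Icc 0 (π / 2 / √k) := by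
  have hsk : 0 < √k := sqrt_pos.2 hk
  have hdiv : ∀ t, 0 ≤ t → HasDerivAt (fun t => b t / a t) (1 / a t ^ 2) t := fun t ht => by
    have ha0 : a t ≠ 0 := by
      rintro h
      nlinarith [hsq t ht, sq_nonneg t]
    exact ((hb t).div (ha t) ha0).congr_deriv (by rw [← hW t]; ring)
  have harctan : ∀ t, HasDerivAt (fun t => arctan (√k * t) / √k) (1 / (1 + k * t ^ 2)) t :=
    fun t => by
      refine ((((hasDerivAt_id t).const_mul √k).arctan).div_const √k).congr_deriv ?_
      field_simp
      rw [sq_sqrt hk.le, id]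
  intro t ht
  refine ⟨le_of_hasDerivAt_le_of_le hdiv (fun _ _ => hasDerivAt_const _ _) (by simp [hb₀])
    (fun t _ => by positivity) t ht, ?_⟩
  calc b t / a t ≤ arctan (√k * t) / √k :=
        le_of_hasDerivAt_le_of_le (fun t _ => harctan t) hdiv (by simp [hb₀])
          (fun t ht => one_div_le_one_div_of_le (by positivity) (hsq t ht)) t ht
    _ ≤ π / 2 / √k := by gcongr; exact (arctan_lt_pi_div_two _).le

lemma abs_le_mul_abs_of_wronskian {a a' b b' c M : ℝ} (hW : a * b' - a' * b = 1) (hc : 0 < c)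
    (hc_le : c ≤ a * a') (hM₀ : 0 ≤ b / a) (hM : b / a ≤ M) :
    |b'| ≤ (c⁻¹ + M) * |a'| := by
  have ha : a ≠ 0 := by rintro rfl; linarith [hc_le]
  have hb' : b' = a⁻¹ + a' * (b / a) := by
    field_simp
    linear_combination hW
  have hinv : |a⁻¹| ≤ c⁻¹ * |a'| := by
    rw [abs_inv, ← one_div, inv_mul_eq_div, div_le_div_iff₀ (abs_pos.2 ha) hc, one_mul,
      ← abs_mul, mul_comm a']
    exact hc_le.trans (le_abs_self _)
  calc |b'| ≤ |a⁻¹| + |a'| * (b / a) := by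
        rw [hb']; exact (abs_add_le _ _).trans (by rw [abs_mul, abs_of_nonneg hM₀])
    _ ≤ c⁻¹ * |a'| + |a'| * M := by gcongr
    _ = (c⁻¹ + M) * |a'| := by ring

theorem stmt_11_general (κ a a' b b' : ℝ → ℝ) (k K τ : ℝ)
    (hk : 0 < k) (hτ : 0 < τ)
    (hκ : ∀ t : ℝ, 0 ≤ t → -K ≤ κ t ∧ κ t ≤ -k)
    (ha : ∀ t : ℝ, HasDerivAt a (a' t) t)
    (ha' : ∀ t : ℝ, HasDerivAt a' (-(κ t * a t)) t)
    (ha0 : a 0 = 1) (ha'0 : a' 0 = 0)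
    (hb : ∀ t : ℝ, HasDerivAt b (b' t) t)
    (hb' : ∀ t : ℝ, HasDerivAt b' (-(κ t * b t)) t)
    (hb0 : b 0 = 0) (hb'0 : b' 0 = 1) :
    ∃ r : ℝ, 0 < r ∧ ∀ t : ℝ, τ ≤ t → r * |b' t| ≤ |a' t| := by
  have ha'' : ∀ t, HasDerivAt a' (-κ t * a t) t := fun t => neg_mul (κ t) (a t) ▸ ha' t
  have hb'' : ∀ t, HasDerivAt b' (-κ t * b t) t := fun t => neg_mul (κ t) (b t) ▸ hb' t
  have hgrowth := growth_of_hasDerivAt_eq_mul hk.le ha ha''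
    (fun t ht => le_neg_of_le_neg (hκ t ht).2) ha0 ha'0
  have hW : ∀ t, a t * b' t - a' t * b t = 1 := fun t => by
    rw [wronskian_eq_const ha ha'' hb hb'' t, ha0, ha'0, hb0, hb'0]; ring
  have hdiv := div_mem_Icc_of_wronskian hk ha hb hW hb0 fun t ht => (hgrowth t ht).2
  refine ⟨((k * τ)⁻¹ + π / 2 / √k)⁻¹, by positivity, fun t ht => ?_⟩
  have ht₀ : 0 ≤ t := hτ.le.trans ht
  rw [inv_mul_le_iff₀ (by positivity)]
  exact abs_le_mul_abs_of_wronskian (hW t) (by positivity)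
    ((mul_le_mul_of_nonneg_left ht hk.le).trans (hgrowth t ht₀).1) (hdiv t ht₀).1 (hdiv t ht₀).2

theorem stmt_11 (κ a a' b b' : ℝ → ℝ) (k K τ : ℝ)
    (hk : 0 < k) (hkK : k ≤ K) (hτ : 0 < τ)
    (hκc : Continuous κ)
    (hκ : ∀ t : ℝ, 0 ≤ t → -K ≤ κ t ∧ κ t ≤ -k)
    (ha : ∀ t : ℝ, HasDerivAt a (a' t) t)
    (ha' : ∀ t : ℝ, HasDerivAt a' (-(κ t * a t)) t)
    (ha0 : a 0 = 1) (ha'0 : a' 0 = 0)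
    (hb : ∀ t : ℝ, HasDerivAt b (b' t) t)
    (hb' : ∀ t : ℝ, HasDerivAt b' (-(κ t * b t)) t)
    (hb0 : b 0 = 0) (hb'0 : b' 0 = 1) :
    ∃ r : ℝ, 0 < r ∧ ∀ t : ℝ, τ ≤ t → r * |b' t| ≤ |a' t| :=
  stmt_11_general κ a a' b b' k K τ hk hτ hκ ha ha' ha0 ha'0 hb hb' hb0 hb'0
end

section
/- Let κ be continuous with -K ≤ κ(t) ≤ -k for all t, 0 < k ≤ K, and let r : ℝ → ℝ be a globally defined solution of the Riccati equation r' + r² + κ = 0 with r(t) > 0 for all t. Then √k ≤ r(t) ≤ √K for all t ∈ ℝ. -/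
/-!
If `r(t₀) < √k`, then `r' ≥ k - r(t₀)² > 0` as long as `r ≤ r(t₀)`, so backward in time `r`
decreases at a fixed rate and reaches `0`. If `r(t₀) > √K`, the same argument applies to `1 / r`,
whose derivative `1 + κ / r²` is at least `1 - K / r(t₀)² > 0` as long as `r ≥ r(t₀)`: backward in
time `r` blows up.
-/

theorem exists_le_zero_of_le_deriv_of_le {f f' : ℝ → ℝ} {c t : ℝ} (hc : 0 < c)
    (hf : ∀ s ≤ t, HasDerivAt f (f' s) s) (hf' : ∀ s ≤ t, f s ≤ f t → c ≤ f' s) :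
    ∃ s ≤ t, f s ≤ 0 := by
  rcases le_or_gt (f t) 0 with hft | hft
  · exact ⟨t, le_rfl, hft⟩
  set b := 2 * f t / c
  have hb : 0 ≤ b := by positivity
  have hrefl : ∀ x ≥ 0, HasDerivAt (fun x => f (t - x)) (-f' (t - x)) x := fun x hx =>
    (hf (t - x) (by linarith)).comp_const_sub t x
  -- Below the fence `f t - c x / 2` the reflected function decreases at rate `c > c / 2`.
  have fence : f (t - b) ≤ f t - c / 2 * b := by
    refine image_le_of_deriv_right_lt_deriv_boundary (f := fun x => f (t - x))
      (B := fun x => f t - c / 2 * x) (B' := fun _ => -(c / 2))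
      (fun x hx => (hrefl x hx.1).continuousAt.continuousWithinAt)
      (fun x hx => (hrefl x hx.1).hasDerivWithinAt) (by simp)
      (fun x => by simpa using ((hasDerivAt_id x).const_mul (c / 2)).const_sub (f t))
      (fun x hx hfx => ?_) ⟨hb, le_rfl⟩
    have := hf' (t - x) (by linarith [hx.1]) (by rw [hfx]; nlinarith [hx.1])
    linarith
  refine ⟨t - b, by linarith, ?_⟩
  have : c / 2 * b = f t := by simp only [b]; field_simp
  linarith

theorem sqrt_le_of_hasDerivAt_riccati {κ r : ℝ → ℝ} {k : ℝ} (hκ : ∀ t, κ t ≤ -k)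
    (hr : ∀ t, HasDerivAt r (-(r t) ^ 2 - κ t) t) (hrpos : ∀ t, 0 < r t) (t : ℝ) :
    Real.sqrt k ≤ r t := by
  by_contra! hlt
  have hrt : r t ^ 2 < k := (Real.lt_sqrt (hrpos t).le).mp hlt
  obtain ⟨s, -, hs⟩ := exists_le_zero_of_le_deriv_of_le (t := t) (sub_pos.mpr hrt)
    (fun s _ => hr s) (fun s _ hst => by nlinarith [hκ s, hrpos s])
  linarith [hrpos s]

theorem le_sqrt_of_hasDerivAt_riccati {κ r : ℝ → ℝ} {K : ℝ} (hK : 0 ≤ K) (hκ : ∀ t, -K ≤ κ t)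
    (hr : ∀ t, HasDerivAt r (-(r t) ^ 2 - κ t) t) (hrpos : ∀ t, 0 < r t) (t : ℝ) :
    r t ≤ Real.sqrt K := by
  by_contra! hlt
  have hrt : K < r t ^ 2 := (Real.sqrt_lt' (hrpos t)).mp hlt
  have hc : 0 < 1 - K / r t ^ 2 := by
    rwa [sub_pos, div_lt_one (pow_pos (hrpos t) 2)]
  have hbound : ∀ s ≤ t, r⁻¹ s ≤ r⁻¹ t → 1 - K / r t ^ 2 ≤ -(-r s ^ 2 - κ s) / r s ^ 2 := by
    intro s _ hst
    have hts : r t ≤ r s := (inv_le_inv₀ (hrpos s) (hrpos t)).mp hst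
    have hsq : r t ^ 2 ≤ r s ^ 2 := pow_le_pow_left₀ (hrpos t).le hts 2
    have hrt_pos := hrpos t
    have hrs_pos := hrpos s
    calc 1 - K / r t ^ 2 ≤ 1 - K / r s ^ 2 := by gcongr
      _ = 1 + -K / r s ^ 2 := by ring
      _ ≤ 1 + κ s / r s ^ 2 := by gcongr; exact hκ s
      _ = -(-r s ^ 2 - κ s) / r s ^ 2 := by field_simp; ring
  obtain ⟨s, -, hs⟩ :=
    exists_le_zero_of_le_deriv_of_le hc (fun s _ => (hr s).inv (hrpos s).ne') hbound
  exact (inv_pos.mpr (hrpos s)).not_ge hs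

theorem stmt_13_general (κ r : ℝ → ℝ) (k K : ℝ)
    (hk : 0 < k) (hkK : k ≤ K)
    (hκ : ∀ t : ℝ, -K ≤ κ t ∧ κ t ≤ -k)
    (hr : ∀ t : ℝ, HasDerivAt r (-(r t) ^ 2 - κ t) t)
    (hrpos : ∀ t : ℝ, 0 < r t) :
    ∀ t : ℝ, Real.sqrt k ≤ r t ∧ r t ≤ Real.sqrt K := fun t =>
  ⟨sqrt_le_of_hasDerivAt_riccati (fun t => (hκ t).2) hr hrpos t,
    le_sqrt_of_hasDerivAt_riccati (hk.le.trans hkK) (fun t => (hκ t).1) hr hrpos t⟩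

theorem stmt_13 (κ r : ℝ → ℝ) (k K : ℝ)
    (hk : 0 < k) (hkK : k ≤ K)
    (hκc : Continuous κ)
    (hκ : ∀ t : ℝ, -K ≤ κ t ∧ κ t ≤ -k)
    (hr : ∀ t : ℝ, HasDerivAt r (-(r t) ^ 2 - κ t) t)
    (hrpos : ∀ t : ℝ, 0 < r t) :
    ∀ t : ℝ, Real.sqrt k ≤ r t ∧ r t ≤ Real.sqrt K :=
  stmt_13_general κ r k K hk hkK hκ hr hrpos
end

section
/- Let r₊, r₋ : ℝ → ℝ be C¹ solutions of ±r±' + r±² + κ = 0 (i.e., r₊' + r₊² + κ = 0 and -r₋' + r₋² + κ = 0) with κ continuous, -K ≤ κ ≤ -k < 0, and r₊(t) > 0 > r₋(t) for all t. Then r₊(t) - r₋(t) ≥ 2√k for all t. -/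
/-!
Both `r₊` and `-r₋` satisfy the differential inequality `f' ≥ k - f²` and stay positive.
Such an `f` can never drop below `√k`: if `f t₀ = a < √k`, then followed backwards in time `f`
keeps decreasing at rate at least `k - a² > 0` and would become negative in finite time.
-/

open Set

lemma sqrt_le_of_deriv_le_sq_sub {u u' : ℝ → ℝ} {k : ℝ}
    (hu : ∀ s ≥ 0, HasDerivAt u (u' s) s) (hu' : ∀ s ≥ 0, u' s ≤ u s ^ 2 - k)
    (hpos : ∀ s ≥ 0, 0 < u s) : √k ≤ u 0 := by
  by_contra! hlt
  set a := u 0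
  have ha : 0 < a := hpos 0 le_rfl
  set c := k - a ^ 2
  have hc : 0 < c := sub_pos.2 ((Real.lt_sqrt ha.le).1 hlt)
  set T := 2 * a / c
  have hT : 0 ≤ T := by positivity
  -- `u` cannot cross the line from above: where they meet, `u ≤ a`, so `u' ≤ a² - k = -c < -c / 2`.
  have fence : ∀ s ∈ Icc 0 T, u s ≤ a - c / 2 * s := by
    refine image_le_of_deriv_right_lt_deriv_boundary
      (fun s hs => (hu s hs.1).continuousAt.continuousWithinAt)
      (fun s hs => (hu s hs.1).hasDerivWithinAt) (by simp [a])
      (fun s => ((hasDerivAt_id s).const_mul (c / 2)).const_sub a) ?_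
    rintro s ⟨hs, -⟩ hus
    have hus_le : u s ≤ a := by rw [hus]; nlinarith
    have : u s ^ 2 ≤ a ^ 2 := pow_le_pow_left₀ (hpos s hs).le hus_le 2
    linarith [hu' s hs]
  have hzero : a - c / 2 * T = 0 := by simp only [T]; field_simp; ring
  linarith [fence T ⟨hT, le_rfl⟩, hpos T hT]

lemma sqrt_le_of_sq_sub_le_deriv {f f' : ℝ → ℝ} {k : ℝ}
    (hf : ∀ t, HasDerivAt f (f' t) t) (hf' : ∀ t, k - f t ^ 2 ≤ f' t)
    (hpos : ∀ t, 0 < f t) (t : ℝ) : √k ≤ f t := by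
  have hrev : ∀ s, HasDerivAt (fun s => f (t - s)) (-f' (t - s)) s := fun s => by
    simpa [Function.comp_def] using (hf (t - s)).comp s ((hasDerivAt_id s).const_sub t)
  simpa using sqrt_le_of_deriv_le_sq_sub (u := fun s => f (t - s)) (fun s _ => hrev s)
    (fun s _ => by linarith [hf' (t - s)]) (fun s _ => hpos (t - s))

theorem stmt_17_general (κ rp rm : ℝ → ℝ) (k K : ℝ)
    (hκ : ∀ t : ℝ, -K ≤ κ t ∧ κ t ≤ -k)
    (hrp : ∀ t : ℝ, HasDerivAt rp (-(rp t) ^ 2 - κ t) t)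
    (hrm : ∀ t : ℝ, HasDerivAt rm ((rm t) ^ 2 + κ t) t)
    (hpos : ∀ t : ℝ, rm t < 0 ∧ 0 < rp t) :
    ∀ t : ℝ, 2 * Real.sqrt k ≤ rp t - rm t := by
  intro t
  have hp : √k ≤ rp t :=
    sqrt_le_of_sq_sub_le_deriv hrp (fun s => by linarith [(hκ s).2]) (fun s => (hpos s).2) t
  have hm : √k ≤ -rm t :=
    sqrt_le_of_sq_sub_le_deriv (fun s => (hrm s).neg)
      (fun s => by simp only [Pi.neg_apply, neg_sq]; linarith [(hκ s).2])
      (fun s => neg_pos.2 (hpos s).1) t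
  linarith

theorem stmt_17 (κ rp rm : ℝ → ℝ) (k K : ℝ)
    (hk : 0 < k) (hkK : k ≤ K)
    (hκc : Continuous κ)
    (hκ : ∀ t : ℝ, -K ≤ κ t ∧ κ t ≤ -k)
    (hrp : ∀ t : ℝ, HasDerivAt rp (-(rp t) ^ 2 - κ t) t)
    (hrm : ∀ t : ℝ, HasDerivAt rm ((rm t) ^ 2 + κ t) t)
    (hpos : ∀ t : ℝ, rm t < 0 ∧ 0 < rp t) :
    ∀ t : ℝ, 2 * Real.sqrt k ≤ rp t - rm t :=
  stmt_17_general κ rp rm k K hκ hrp hrm hpos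
end
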